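/- Let A ∈ ℝ^{n×n} be symmetric with largest eigenvalue α₁, let g ∈ ℝ^n, Δ > 0, and suppose (λ_opt, s_opt) satisfies the TRS optimality conditions with ‖s_opt‖ = Δ. Let 0 ≤ λ_k ≤ λ_opt and let s_k ∈ ℝ^n satisfy ‖s_k‖ = Δ. Then ‖(A + λ_k·I)·s_k + g‖ ≤ (λ_opt − λ_k)·Δ + (α₁ + λ_opt)·‖s_opt − s_k‖. -/

import Mathlib

open Matrix

noncomputable section

/-- Euclidean 2-norm of a finitely indexed real vector. -/
def enorm2 {ι : Type*} [Fintype ι] (v : ι → ℝ) : ℝ := ‖(WithLp.equiv 2 (ι → ℝ)).symm v‖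

lemma enorm2_add_le {ι : Type*} [Fintype ι] (x y : ι → ℝ) :
    enorm2 (x + y) ≤ enorm2 x + enorm2 y :=
  norm_add_le ((WithLp.equiv 2 (ι → ℝ)).symm x) ((WithLp.equiv 2 (ι → ℝ)).symm y)

lemma enorm2_smul {ι : Type*} [Fintype ι] (c : ℝ) (x : ι → ℝ) :
    enorm2 (c • x) = |c| * enorm2 x := by
  simpa [enorm2] using norm_smul c ((WithLp.equiv 2 (ι → ℝ)).symm x)

lemma enorm2_sub_rev {ι : Type*} [Fintype ι] (x y : ι → ℝ) :
    enorm2 (x - y) = enorm2 (y - x) :=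
  norm_sub_rev ((WithLp.equiv 2 (ι → ℝ)).symm x) ((WithLp.equiv 2 (ι → ℝ)).symm y)

/-- Operator-norm style bound for a Hermitian matrix whose eigenvalues are bounded in
absolute value by `c`. -/
lemma enorm2_mulVec_le {n : ℕ} {B : Matrix (Fin n) (Fin n) ℝ} (hB : B.IsHermitian)
    {c : ℝ} (hc : 0 ≤ c) (hev : ∀ i, |hB.eigenvalues i| ≤ c) (v : Fin n → ℝ) :
    enorm2 (B.mulVec v) ≤ c * enorm2 v := by
  set w : EuclideanSpace ℝ (Fin n) := (WithLp.equiv 2 (Fin n → ℝ)).symm v with hw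
  have hlhs : enorm2 (B.mulVec v) = ‖Matrix.toEuclideanLin B w‖ := by
    rw [hw]; rfl
  have hrhs : enorm2 v = ‖w‖ := rfl
  rw [hlhs, hrhs]
  set b := hB.eigenvectorBasis with hb
  have hsym : B.toEuclideanLin.IsSymmetric := Matrix.isHermitian_iff_isSymmetric.1 hB
  have hrepr : ∀ i, b.repr (Matrix.toEuclideanLin B w) i =
      hB.eigenvalues i * b.repr w i := by
    intro i
    rw [b.repr_apply_apply, b.repr_apply_apply, ← hsym (b i) w]
    have hTe : Matrix.toEuclideanLin B (b i) = hB.eigenvalues i • (b i) := by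
      apply (WithLp.equiv 2 (Fin n → ℝ)).injective
      simpa [Matrix.toEuclideanLin_apply] using hB.mulVec_eigenvectorBasis i
    rw [hTe, inner_smul_left]
    simp
  rw [← (b.repr).norm_map (Matrix.toEuclideanLin B w), ← (b.repr).norm_map w]
  rw [EuclideanSpace.norm_eq, EuclideanSpace.norm_eq]
  rw [show c * Real.sqrt (∑ i, ‖b.repr w i‖ ^ 2) =
      Real.sqrt (c ^ 2 * ∑ i, ‖b.repr w i‖ ^ 2) by
    rw [Real.sqrt_mul (by positivity), Real.sqrt_sq hc]]
  apply Real.sqrt_le_sqrt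
  rw [Finset.mul_sum]
  apply Finset.sum_le_sum
  intro i _
  rw [hrepr i]
  have h1 : ‖hB.eigenvalues i * b.repr w i‖ = |hB.eigenvalues i| * ‖b.repr w i‖ := by
    simp [abs_mul, Real.norm_eq_abs]
  rw [h1, mul_pow]
  have h2 : |hB.eigenvalues i| ^ 2 ≤ c ^ 2 := by
    apply pow_le_pow_left₀ (abs_nonneg _) (hev i)
  exact mul_le_mul_of_nonneg_right h2 (by positivity)

/-- Residual bound: under the TRS optimality conditions with `‖s_opt‖ = Δ`, for any
`0 ≤ λ_k ≤ λ_opt` and any `s_k` with `‖s_k‖ = Δ`,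
`‖(A + λ_k I) s_k + g‖ ≤ (λ_opt − λ_k) Δ + (α₁ + λ_opt) ‖s_opt − s_k‖`. -/
theorem stmt_17 {n : ℕ} (A : Matrix (Fin n) (Fin n) ℝ) (hA : A.IsSymm)
    (α₁ : ℝ)
    (hα₁ : (∃ v : Fin n → ℝ, v ≠ 0 ∧ A.mulVec v = α₁ • v) ∧
      ∀ (μ : ℝ) (v : Fin n → ℝ), v ≠ 0 → A.mulVec v = μ • v → μ ≤ α₁)
    (g : Fin n → ℝ) (Δ : ℝ) (hΔ : 0 < Δ)
    (lamopt : ℝ) (sopt : Fin n → ℝ)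
    (h1 : enorm2 sopt = Δ) (h2 : 0 ≤ lamopt)
    (h3 : (A + lamopt • (1 : Matrix (Fin n) (Fin n) ℝ)).mulVec sopt = -g)
    (h4 : lamopt * (Δ - enorm2 sopt) = 0)
    (h5 : (A + lamopt • (1 : Matrix (Fin n) (Fin n) ℝ)).PosSemidef)
    (lamk : ℝ) (hlamk0 : 0 ≤ lamk) (hlamk : lamk ≤ lamopt)
    (sk : Fin n → ℝ) (hsk : enorm2 sk = Δ) :
    enorm2 ((A + lamk • (1 : Matrix (Fin n) (Fin n) ℝ)).mulVec sk + g) ≤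
      (lamopt - lamk) * Δ + (α₁ + lamopt) * enorm2 (sopt - sk) := by
  set B : Matrix (Fin n) (Fin n) ℝ := A + lamopt • (1 : Matrix (Fin n) (Fin n) ℝ) with hBdef
  have hB : B.IsHermitian := h5.1
  set c : ℝ := α₁ + lamopt with hcdef
  -- c is nonnegative
  have hc : 0 ≤ c := by
    obtain ⟨v, hv, hAv⟩ := hα₁.1
    have hBv : B.mulVec v = c • v := by
      rw [hBdef, Matrix.add_mulVec, hAv, Matrix.smul_mulVec, Matrix.one_mulVec,
        hcdef, add_smul]
    have hpos : 0 < dotProduct v v :=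
      lt_of_le_of_ne (Finset.sum_nonneg fun i _ => mul_self_nonneg _)
        (fun h => hv (dotProduct_self_eq_zero.1 h.symm))
    have hkey := h5.dotProduct_mulVec_nonneg v
    rw [hBv] at hkey
    have hvv : star v ⬝ᵥ v = v ⬝ᵥ v := by simp [dotProduct, star]
    rw [dotProduct_smul, hvv, smul_eq_mul] at hkey
    nlinarith
  -- eigenvalue bounds for B
  have hev : ∀ i, |hB.eigenvalues i| ≤ c := by
    intro i
    have hnn : 0 ≤ hB.eigenvalues i := h5.eigenvalues_nonneg i
    set e : Fin n → ℝ := ⇑(hB.eigenvectorBasis i) with he_def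
    have he : B *ᵥ e = hB.eigenvalues i • e := hB.mulVec_eigenvectorBasis i
    have hne : e ≠ 0 := fun h => hB.eigenvectorBasis.orthonormal.ne_zero i ((WithLp.ofLp_eq_zero _).1 h)
    have h' : B *ᵥ e = A *ᵥ e + lamopt • e := by
      rw [hBdef, Matrix.add_mulVec, Matrix.smul_mulVec, Matrix.one_mulVec]
    have hsum : A *ᵥ e + lamopt • e = hB.eigenvalues i • e := by rw [← h', he]
    have hAe : A *ᵥ e = (hB.eigenvalues i - lamopt) • e := by
      rw [sub_smul, ← hsum]; abel
    have := hα₁.2 (hB.eigenvalues i - lamopt) e hne hAe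
    rw [abs_of_nonneg hnn, hcdef]
    linarith
  -- key algebraic identity
  have hid : (A + lamk • (1 : Matrix (Fin n) (Fin n) ℝ)).mulVec sk + g =
      B.mulVec (sk - sopt) + (lamk - lamopt) • sk := by
    have hBsopt : B *ᵥ sopt = -g := h3
    rw [Matrix.mulVec_sub, hBsopt]
    simp only [Matrix.mulVec_sub, hBsopt, hBdef, Matrix.add_mulVec,
      Matrix.smul_mulVec, Matrix.one_mulVec, sub_neg_eq_add, sub_smul]
    abel
  rw [hid]
  calc enorm2 (B.mulVec (sk - sopt) + (lamk - lamopt) • sk)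
      ≤ enorm2 (B.mulVec (sk - sopt)) + enorm2 ((lamk - lamopt) • sk) :=
        enorm2_add_le _ _
    _ ≤ c * enorm2 (sk - sopt) + |lamk - lamopt| * enorm2 sk := by
        gcongr
        · exact enorm2_mulVec_le hB hc hev _
        · rw [enorm2_smul]
    _ = (lamopt - lamk) * Δ + (α₁ + lamopt) * enorm2 (sopt - sk) := by
        rw [enorm2_sub_rev, hsk, abs_of_nonpos (by linarith), hcdef]
        ring
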